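/- Let m < n ≤ k be positive integers. The restriction map p : V_n(ℝ^k) → V_m(ℝ^k), sending an orthonormal n-frame (v₁, …, v_n) in ℝ^k to its first m vectors (v₁, …, v_m), is a fiber bundle with fiber V_{n−m}(ℝ^{k−m}): p is continuous and surjective, and for every orthonormal m-frame w in ℝ^k there exist an open neighborhood U of w in V_m(ℝ^k) and a homeomorphism φ : p⁻¹(U) → U × V_{n−m}(ℝ^{k−m}) such that the first coordinate of φ(v) equals p(v) for all v ∈ p⁻¹(U). -/

import Mathlib

/-- The Stiefel manifold `V_n(ℝ^k)` of orthonormal `n`-frames in `ℝ^k`, topologized as a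
subspace of the product of `n` copies of `ℝ^k`. -/
abbrev RealStiefel (n k : ℕ) :=
  {v : Fin n → EuclideanSpace ℝ (Fin k) // Orthonormal ℝ v}

/-- The restriction map `V_n(ℝ^k) → V_m(ℝ^k)` sending an orthonormal `n`-frame
`(v₁, …, v_n)` to its first `m` vectors `(v₁, …, v_m)`. -/
def stiefelProj (m n k : ℕ) (h : m ≤ n) : RealStiefel n k → RealStiefel m k :=
  fun v => ⟨fun i => v.1 (Fin.castLE h i), v.2.comp _ (Fin.castLE_injective h)⟩

/-!
Extend an orthonormal `m`-frame `w₀` to an orthonormal basis `e` of `ℝ^k`. For frames `w` near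
`w₀` the vectors `w₁, …, w_m, e_{m+1}, …, e_k` stay linearly independent, and Gram–Schmidt turns
them into an orthonormal basis `b w` that begins with `w` and depends continuously on `w`. The
isometry `(b w)⁻¹` carries the fiber over `w` onto the fiber over the standard `m`-frame, and a
frame lies over the standard one exactly when it is the standard frame followed by an orthonormal
`(n-m)`-frame supported on the last `k-m` coordinates.
-/

open Finset InnerProductSpace
open scoped InnerProductSpace

section GramSchmidt

variable {𝕜 E ι : Type*} [RCLike 𝕜] [NormedAddCommGroup E] [InnerProductSpace 𝕜 E]
  [LinearOrder ι] [LocallyFiniteOrderBot ι] [WellFoundedLT ι]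

theorem continuousOn_gramSchmidt (n : ι) :
    ContinuousOn (fun f : ι → E => gramSchmidt 𝕜 f n) {f | LinearIndependent 𝕜 f} := by
  induction n using WellFoundedLT.induction with
  | ind n ih =>
  have hdef (f : ι → E) : gramSchmidt 𝕜 f n = f n - ∑ i ∈ Iio n,
      (⟪gramSchmidt 𝕜 f i, f n⟫_𝕜 / (‖gramSchmidt 𝕜 f i‖ : 𝕜) ^ 2) • gramSchmidt 𝕜 f i :=
    eq_sub_of_add_eq (gramSchmidt_def'' 𝕜 f n).symm
  refine ContinuousOn.congr ?_ fun f _ => hdef f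
  refine (continuous_apply n).continuousOn.sub (continuousOn_finsetSum _ fun i hi => ?_)
  have hi := ih i (mem_Iio.mp hi)
  refine ((hi.inner (continuous_apply n).continuousOn).div
    ((RCLike.continuous_ofReal.comp_continuousOn hi.norm).pow 2) fun f hf => ?_).smul hi
  simpa using gramSchmidt_ne_zero i hf

theorem continuousOn_gramSchmidtNormed (n : ι) :
    ContinuousOn (fun f : ι → E => gramSchmidtNormed 𝕜 f n) {f | LinearIndependent 𝕜 f} := by
  have hn := continuousOn_gramSchmidt (𝕜 := 𝕜) (E := E) n
  refine ((RCLike.continuous_ofReal.comp_continuousOn hn.norm).inv₀ fun f hf => ?_).smul hn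
  simpa using gramSchmidt_ne_zero n hf

theorem gramSchmidt_apply_of_orthogonal_Iic {f : ι → E} {n : ι}
    (hf : ∀ i ≤ n, ∀ j ≤ n, i ≠ j → ⟪f i, f j⟫_𝕜 = 0) :
    gramSchmidt 𝕜 f n = f n := by
  induction n using WellFoundedLT.induction with
  | ind n ih =>
  rw [gramSchmidt_def, sub_eq_self]
  refine sum_eq_zero fun i hi => ?_
  have hin : i < n := mem_Iio.mp hi
  rw [ih i hin fun a ha b hb => hf a (ha.trans hin.le) b (hb.trans hin.le),
    Submodule.starProjection_singleton, hf i hin.le n le_rfl hin.ne, zero_div, zero_smul]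

theorem gramSchmidtNormed_apply_of_orthogonal_Iic {f : ι → E} {n : ι}
    (hf : ∀ i ≤ n, ∀ j ≤ n, i ≠ j → ⟪f i, f j⟫_𝕜 = 0) (hn : ‖f n‖ = 1) :
    gramSchmidtNormed 𝕜 f n = f n := by
  rw [gramSchmidtNormed, gramSchmidt_apply_of_orthogonal_Iic hf, hn, RCLike.ofReal_one, inv_one,
    one_smul]

variable [FiniteDimensional 𝕜 E] {m r : ℕ}

theorem Orthonormal.exists_orthonormalBasis_castAdd_eq
    (hE : Module.finrank 𝕜 E = m + r) {w : Fin m → E} (hw : Orthonormal 𝕜 w) :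
    ∃ e : OrthonormalBasis (Fin (m + r)) 𝕜 E, ∀ i, e (Fin.castAdd r i) = w i := by
  let ψ := Equiv.ofInjective _ (Fin.castAdd_injective m r)
  have hv : Orthonormal 𝕜 ((Set.range (Fin.castAdd r)).domRestrict (Fin.append w 0)) := by
    convert hw.comp ψ.symm ψ.symm.injective
    ext ⟨_, i, rfl⟩ : 1
    simp [ψ, Equiv.ofInjective_symm_apply]
  obtain ⟨e, he⟩ := hv.exists_orthonormalBasis_extension_of_card_eq (by simpa using hE)
  exact ⟨e, fun i => by simpa using he _ (Set.mem_range_self i)⟩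

noncomputable def gramSchmidtExtend (e : OrthonormalBasis (Fin (m + r)) 𝕜 E) (w : Fin m → E) :
    OrthonormalBasis (Fin (m + r)) 𝕜 E :=
  gramSchmidtOrthonormalBasis (Module.finrank_eq_card_basis e.toBasis)
    (Fin.append w fun j => e (Fin.natAdd m j))

theorem gramSchmidtExtend_castAdd (e : OrthonormalBasis (Fin (m + r)) 𝕜 E) {w : Fin m → E}
    (hw : Orthonormal 𝕜 w) (i : Fin m) : gramSchmidtExtend e w (Fin.castAdd r i) = w i := by
  have hlt {a : Fin (m + r)} (ha : a ≤ Fin.castAdd r i) : (a : ℕ) < m :=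
    lt_of_le_of_lt (Fin.le_def.mp ha) i.2
  have hnormed : gramSchmidtNormed 𝕜 (Fin.append w fun j => e (Fin.natAdd m j))
      (Fin.castAdd r i) = w i := by
    rw [gramSchmidtNormed_apply_of_orthogonal_Iic, Fin.append_left]
    · intro a ha b hb hab
      rw [← Fin.castAdd_castLT r a (hlt ha), ← Fin.castAdd_castLT r b (hlt hb), Fin.append_left,
        Fin.append_left]
      exact hw.2 fun h => hab (by simpa using congrArg (Fin.castAdd r) h)
    · rw [Fin.append_left, hw.1 i]
  rw [gramSchmidtExtend, gramSchmidtOrthonormalBasis_apply _ (by rw [hnormed]; exact hw.ne_zero i),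
    hnormed]

theorem continuousOn_gramSchmidtExtend (e : OrthonormalBasis (Fin (m + r)) 𝕜 E)
    (j : Fin (m + r)) :
    ContinuousOn (fun w => gramSchmidtExtend e w j)
      {w : Fin m → E | LinearIndependent 𝕜 (Fin.append w fun j => e (Fin.natAdd m j))} := by
  have happend : Continuous fun w : Fin m → E => Fin.append w fun j => e (Fin.natAdd m j) := by
    fun_prop
  refine ((continuousOn_gramSchmidtNormed j).comp happend.continuousOn fun w hw => hw).congr
    fun w hw => ?_
  refine gramSchmidtOrthonormalBasis_apply _ ?_
  rw [← norm_ne_zero_iff, gramSchmidtNormed_unit_length j hw]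
  exact one_ne_zero

end GramSchmidt

section BasisField

variable {X ι 𝕜 E : Type*} [TopologicalSpace X] [Fintype ι] [RCLike 𝕜] [NormedAddCommGroup E]
  [InnerProductSpace 𝕜 E] {b : X → OrthonormalBasis ι 𝕜 E}

theorem Continuous.orthonormalBasis_repr (hb : ∀ i, Continuous fun x => b x i) {f : X → E}
    (hf : Continuous f) : Continuous fun x => (b x).repr (f x) := by
  have hrepr (x : X) : (b x).repr (f x) = WithLp.toLp 2 fun i => ⟪b x i, f x⟫_𝕜 := by
    ext i
    exact (b x).repr_apply_apply (f x) i
  simp only [hrepr]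
  exact (PiLp.continuous_toLp 2 _).comp (continuous_pi fun i => (hb i).inner hf)

theorem Continuous.orthonormalBasis_repr_symm (hb : ∀ i, Continuous fun x => b x i)
    {g : X → EuclideanSpace 𝕜 ι} (hg : Continuous g) :
    Continuous fun x => (b x).repr.symm (g x) := by
  simp only [← OrthonormalBasis.sum_repr_symm]
  exact continuous_finsetSum _ fun i _ => ((PiLp.continuous_apply 2 _ i).comp hg).smul (hb i)

end BasisField

theorem Orthonormal.fin_append {𝕜 E : Type*} [RCLike 𝕜] [NormedAddCommGroup E]
    [InnerProductSpace 𝕜 E] {a b : ℕ} {u : Fin a → E} {v : Fin b → E} (hu : Orthonormal 𝕜 u)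
    (hv : Orthonormal 𝕜 v) (huv : ∀ i j, ⟪u i, v j⟫_𝕜 = 0) : Orthonormal 𝕜 (Fin.append u v) := by
  refine ⟨fun i => ?_, fun i j hij => ?_⟩
  · induction i using Fin.addCases <;> simp [hu.1, hv.1]
  · induction i using Fin.addCases <;> induction j using Fin.addCases
    · simpa using hu.2 (by simpa using hij)
    · simpa using huv _ _
    · simpa using inner_eq_zero_symm.mp (huv _ _)
    · simpa using hv.2 (by simpa using hij)

namespace EuclideanSpace

variable {m r : ℕ}

noncomputable def zeroAppend (m : ℕ) :
    EuclideanSpace ℝ (Fin r) →ₗᵢ[ℝ] EuclideanSpace ℝ (Fin (m + r)) where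
  toFun x := WithLp.toLp 2 (Fin.append 0 x.ofLp)
  map_add' x y := by
    ext i
    induction i using Fin.addCases <;> simp
  map_smul' c x := by
    ext i
    induction i using Fin.addCases <;> simp
  norm_map' x := by simp [EuclideanSpace.norm_eq, Fin.sum_univ_add]

@[simp]
theorem zeroAppend_castAdd (x : EuclideanSpace ℝ (Fin r)) (i : Fin m) :
    zeroAppend m x (Fin.castAdd r i) = 0 := by
  simp [zeroAppend]

@[simp]
theorem zeroAppend_natAdd (x : EuclideanSpace ℝ (Fin r)) (i : Fin r) :
    zeroAppend m x (Fin.natAdd m i) = x i := by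
  simp [zeroAppend]

def dropLeft (m : ℕ) (x : EuclideanSpace ℝ (Fin (m + r))) : EuclideanSpace ℝ (Fin r) :=
  WithLp.toLp 2 fun i => x (Fin.natAdd m i)

theorem continuous_dropLeft : Continuous (dropLeft m (r := r)) :=
  (PiLp.continuous_toLp 2 _).comp (continuous_pi fun _ => PiLp.continuous_apply 2 _ _)

@[simp]
theorem dropLeft_zeroAppend (x : EuclideanSpace ℝ (Fin r)) :
    dropLeft m (zeroAppend m x) = x := by
  ext i
  simp [dropLeft]

theorem zeroAppend_dropLeft {x : EuclideanSpace ℝ (Fin (m + r))}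
    (hx : ∀ i, x (Fin.castAdd r i) = 0) : zeroAppend m (dropLeft m x) = x := by
  ext i
  induction i using Fin.addCases <;> simp [dropLeft, hx]

end EuclideanSpace

section Stiefel

variable {m n k : ℕ}

theorem continuous_stiefelProj (h : m ≤ n) : Continuous (stiefelProj m n k h) := by
  refine Continuous.subtype_mk ?_ _
  exact continuous_pi fun i => (continuous_apply _).comp continuous_subtype_val

namespace RealStiefel

noncomputable def std (h : n ≤ k) : RealStiefel n k :=
  ⟨fun i => EuclideanSpace.single (Fin.castLE h i) 1, by
    simpa [Function.comp_def] using
      (EuclideanSpace.basisFun (Fin k) ℝ).orthonormal.comp _ (Fin.castLE_injective h)⟩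

noncomputable def map (g : EuclideanSpace ℝ (Fin k) ≃ₗᵢ[ℝ] EuclideanSpace ℝ (Fin k))
    (v : RealStiefel n k) : RealStiefel n k :=
  ⟨g ∘ v.1, v.2.comp_linearIsometryEquiv g⟩

theorem map_repr_eq_std (hmk : m ≤ k) {b : OrthonormalBasis (Fin k) ℝ (EuclideanSpace ℝ (Fin k))}
    {w : RealStiefel m k} (hb : ∀ i, b (Fin.castLE hmk i) = w.1 i) :
    w.map b.repr = std hmk := by
  ext i : 2
  simp [map, std, ← hb]

theorem map_repr_symm_std (hmk : m ≤ k)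
    {b : OrthonormalBasis (Fin k) ℝ (EuclideanSpace ℝ (Fin k))} {w : RealStiefel m k}
    (hb : ∀ i, b (Fin.castLE hmk i) = w.1 i) : (std hmk).map b.repr.symm = w := by
  ext i : 2
  simp [map, std, ← hb]

end RealStiefel

open RealStiefel

theorem stiefelProj_map (h : m ≤ n)
    (g : EuclideanSpace ℝ (Fin k) ≃ₗᵢ[ℝ] EuclideanSpace ℝ (Fin k)) (v : RealStiefel n k) :
    stiefelProj m n k h (v.map g) = (stiefelProj m n k h v).map g :=
  rfl

noncomputable def stiefelProjHomeomorphOfBasisField (hmk : m ≤ k) (hmn : m ≤ n)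
    {U : Set (RealStiefel m k)} (b : U → OrthonormalBasis (Fin k) ℝ (EuclideanSpace ℝ (Fin k)))
    (hb : ∀ w i, b w (Fin.castLE hmk i) = w.1.1 i) (hbc : ∀ i, Continuous fun w => b w i) :
    {v // stiefelProj m n k hmn v ∈ U} ≃ₜ U × {v // stiefelProj m n k hmn v = std hmk} where
  toFun v := (⟨_, v.2⟩, ⟨v.1.map (b ⟨_, v.2⟩).repr, by
    rw [stiefelProj_map, map_repr_eq_std hmk (hb _)]⟩)
  invFun z := ⟨z.2.1.map (b z.1).repr.symm, by
    rw [stiefelProj_map, z.2.2, map_repr_symm_std hmk (hb _)]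
    exact z.1.2⟩
  left_inv v := by
    ext : 3
    simp [RealStiefel.map]
  right_inv z := by
    have hbase : stiefelProj m n k hmn (z.2.1.map (b z.1).repr.symm) = z.1 := by
      rw [stiefelProj_map, z.2.2, map_repr_symm_std hmk (hb _)]
    have hrepr : ∀ w : U, w = z.1 → ∀ x, (b w).repr ((b z.1).repr.symm x) = x := by
      rintro _ rfl x
      exact LinearIsometryEquiv.apply_symm_apply _ x
    refine Prod.ext (Subtype.ext hbase) ?_
    ext a : 3
    exact hrepr _ (Subtype.ext hbase) _
  continuous_toFun := by
    have hbase : Continuous fun v : {v // stiefelProj m n k hmn v ∈ U} =>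
        (⟨stiefelProj m n k hmn v, v.2⟩ : U) :=
      ((continuous_stiefelProj hmn).comp continuous_subtype_val).subtype_mk _
    refine hbase.prodMk (Continuous.subtype_mk (Continuous.subtype_mk ?_ _) _)
    exact continuous_pi fun a => Continuous.orthonormalBasis_repr (fun i => (hbc i).comp hbase)
      ((continuous_apply a).comp (continuous_subtype_val.comp continuous_subtype_val))
  continuous_invFun := by
    refine Continuous.subtype_mk (Continuous.subtype_mk ?_ _) _
    exact continuous_pi fun a => Continuous.orthonormalBasis_repr_symm
      (fun i => (hbc i).comp continuous_fst) ((continuous_apply a).comp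
        (continuous_subtype_val.comp (continuous_subtype_val.comp continuous_snd)))

end Stiefel

section Fiber

open EuclideanSpace RealStiefel

variable {m r s : ℕ}

theorem apply_natAdd_castAdd_of_stiefelProj_eq_std {v : RealStiefel (m + s) (m + r)}
    (hv : stiefelProj m (m + s) (m + r) (Nat.le_add_right m s) v = std (Nat.le_add_right m r))
    (j : Fin s) (i : Fin m) : v.1 (Fin.natAdd m j) (Fin.castAdd r i) = 0 := by
  have hi : v.1 (Fin.castAdd s i) = single (Fin.castAdd r i) 1 :=
    congrFun (congrArg Subtype.val hv) i
  have hne : Fin.castAdd s i ≠ Fin.natAdd m j := by simp [Fin.ext_iff]; omega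
  simpa [hi, inner_single_left] using v.2.2 hne

theorem orthonormal_dropLeft_of_stiefelProj_eq_std {v : RealStiefel (m + s) (m + r)}
    (hv : stiefelProj m (m + s) (m + r) (Nat.le_add_right m s) v = std (Nat.le_add_right m r)) :
    Orthonormal ℝ fun j => dropLeft m (v.1 (Fin.natAdd m j)) := by
  rw [← (zeroAppend m).orthonormal_comp_iff]
  simpa [Function.comp_def, zeroAppend_dropLeft (apply_natAdd_castAdd_of_stiefelProj_eq_std hv _)]
    using v.2.comp _ (Fin.natAdd_injective s m)

noncomputable def stiefelProjFiberStdHomeomorph :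
    {v : RealStiefel (m + s) (m + r) //
      stiefelProj m (m + s) (m + r) (Nat.le_add_right m s) v = std (Nat.le_add_right m r)} ≃ₜ
      RealStiefel s r where
  toFun v := ⟨fun j => dropLeft m (v.1.1 (Fin.natAdd m j)),
    orthonormal_dropLeft_of_stiefelProj_eq_std v.2⟩
  invFun u := ⟨⟨Fin.append (std _).1 (zeroAppend m ∘ u.1),
    (std _).2.fin_append (u.2.comp_linearIsometry (zeroAppend m)) fun i j => by
      change ⟪single (Fin.castAdd r i) 1, zeroAppend m (u.1 j)⟫_ℝ = 0
      simp [inner_single_left]⟩, by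
    ext i : 2
    exact Fin.append_left _ _ i⟩
  left_inv v := by
    ext a : 3
    induction a using Fin.addCases with
    | left i =>
      dsimp only
      rw [Fin.append_left]
      exact (congrFun (congrArg Subtype.val v.2) i).symm
    | right j => simp [zeroAppend_dropLeft (apply_natAdd_castAdd_of_stiefelProj_eq_std v.2 j)]
  right_inv u := by
    ext j : 2
    simp
  continuous_toFun := by
    refine Continuous.subtype_mk (continuous_pi fun j => continuous_dropLeft.comp ?_) _
    exact (continuous_apply _).comp (continuous_subtype_val.comp continuous_subtype_val)
  continuous_invFun := by
    refine Continuous.subtype_mk (Continuous.subtype_mk ?_ _) _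
    exact (Fin.continuous_append m s).comp (continuous_const.prodMk (continuous_pi fun j =>
      (zeroAppend m).continuous.comp ((continuous_apply j).comp continuous_subtype_val)))

end Fiber

theorem exists_stiefelProj_trivialization {m r s : ℕ} (h : m ≤ m + s)
    (w₀ : RealStiefel m (m + r)) :
    ∃ U : Set (RealStiefel m (m + r)), IsOpen U ∧ w₀ ∈ U ∧
      ∃ φ : {v // stiefelProj m (m + s) (m + r) h v ∈ U} ≃ₜ U × RealStiefel s r,
        ∀ v, ((φ v).1 : RealStiefel m (m + r)) = stiefelProj m (m + s) (m + r) h v.1 := by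
  obtain ⟨e, he⟩ := w₀.2.exists_orthonormalBasis_castAdd_eq finrank_euclideanSpace_fin
  have hw₀ : Fin.append w₀.1 (fun j => e (Fin.natAdd m j)) = e := by
    funext a
    induction a using Fin.addCases <;> simp [he]
  refine ⟨{w | LinearIndependent ℝ (Fin.append w.1 fun j => e (Fin.natAdd m j))},
    isOpen_setOfPred_linearIndependent.preimage (by fun_prop), ?_,
    (stiefelProjHomeomorphOfBasisField (Nat.le_add_right m r) h
      (fun w => gramSchmidtExtend e w.1.1) (fun w => gramSchmidtExtend_castAdd e w.1.2)
      fun i => (continuousOn_gramSchmidtExtend e i).comp_continuous (by fun_prop) fun w => w.2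
    ).trans ((Homeomorph.refl _).prodCongr stiefelProjFiberStdHomeomorph), fun v => rfl⟩
  show LinearIndependent ℝ _
  rw [hw₀]
  exact e.orthonormal.linearIndependent

theorem stiefelProj_isFiberBundle_general (m n k : ℕ) (hmn : m < n) (hnk : n ≤ k) :
    Continuous (stiefelProj m n k hmn.le) ∧
    Function.Surjective (stiefelProj m n k hmn.le) ∧
    ∀ w : RealStiefel m k,
      ∃ U : Set (RealStiefel m k), IsOpen U ∧ w ∈ U ∧
        ∃ φ : {v : RealStiefel n k // stiefelProj m n k hmn.le v ∈ U} ≃ₜ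
            U × RealStiefel (n - m) (k - m),
          ∀ v : {v : RealStiefel n k // stiefelProj m n k hmn.le v ∈ U},
            ((φ v).1 : RealStiefel m k) = stiefelProj m n k hmn.le v.1 := by
  obtain ⟨s, rfl⟩ := Nat.exists_eq_add_of_le hmn.le
  obtain ⟨r, rfl⟩ := Nat.exists_eq_add_of_le (hmn.le.trans hnk)
  rw [Nat.add_sub_cancel_left, Nat.add_sub_cancel_left]
  refine ⟨continuous_stiefelProj _, fun w => ?_, exists_stiefelProj_trivialization _⟩
  obtain ⟨U, -, hw, φ, hφ⟩ := exists_stiefelProj_trivialization hmn.le w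
  exact ⟨(φ.symm (⟨w, hw⟩, RealStiefel.std (by omega))).1, by rw [← hφ, φ.apply_symm_apply]⟩

/-- For positive integers `m < n ≤ k`, the restriction map `p : V_n(ℝ^k) → V_m(ℝ^k)`
(sending an orthonormal `n`-frame to its first `m` vectors) is a fiber bundle with fiber
`V_{n-m}(ℝ^{k-m})`: it is continuous and surjective, and every orthonormal `m`-frame in
`ℝ^k` has an open neighborhood `U` over which `p` is trivial, via a homeomorphism
`p⁻¹(U) ≃ U × V_{n-m}(ℝ^{k-m})` whose first coordinate is `p`. -/
theorem stiefelProj_isFiberBundle (m n k : ℕ) (hm : 0 < m) (hmn : m < n) (hnk : n ≤ k) :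
    Continuous (stiefelProj m n k hmn.le) ∧
    Function.Surjective (stiefelProj m n k hmn.le) ∧
    ∀ w : RealStiefel m k,
      ∃ U : Set (RealStiefel m k), IsOpen U ∧ w ∈ U ∧
        ∃ φ : {v : RealStiefel n k // stiefelProj m n k hmn.le v ∈ U} ≃ₜ
            U × RealStiefel (n - m) (k - m),
          ∀ v : {v : RealStiefel n k // stiefelProj m n k hmn.le v ∈ U},
            ((φ v).1 : RealStiefel m k) = stiefelProj m n k hmn.le v.1 :=
  stiefelProj_isFiberBundle_general m n k hmn hnk
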